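/- The function ξ ↦ ξ·(1 − g(ξ)) tends to 0 as ξ → +∞ and the function ξ ↦ ξ·g(−ξ) tends to 0 as ξ → +∞, where g(ξ) = (√(e^{4ξ}+4e^{2ξ}) − e^{2ξ})/2. -/
import Mathlib


noncomputable def gH (h : ℝ) : ℝ :=
  (Real.sqrt (Real.exp (4 * h) + 4 * Real.exp (2 * h)) - Real.exp (2 * h)) / 2

lemma gH_bounds1 (x : ℝ) (hx : 0 ≤ x) :
    0 ≤ 1 - gH x ∧ 1 - gH x ≤ 2 * Real.exp (-x) := by
  have ha : (1:ℝ) ≤ Real.exp (2 * x) := by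
    rw [show (1:ℝ) = Real.exp 0 by simp]
    exact Real.exp_le_exp.mpr (by linarith)
  set a := Real.exp (2 * x) with hadef
  have ha0 : 0 < a := Real.exp_pos _
  have h4 : Real.exp (4 * x) = a ^ 2 := by
    rw [hadef, ← Real.exp_nat_mul]; ring_nf
  have hnn : 0 ≤ Real.exp (4 * x) + 4 * Real.exp (2 * x) := by positivity
  set s := Real.sqrt (Real.exp (4 * x) + 4 * Real.exp (2 * x)) with hsdef
  have hs0 : 0 ≤ s := Real.sqrt_nonneg _
  have hs2 : s ^ 2 = a ^ 2 + 4 * a := by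
    rw [hsdef, Real.sq_sqrt hnn, h4]
  have hinv : Real.exp (-x) * Real.exp (-x) * a = 1 := by
    rw [← Real.exp_add, ← Real.exp_add]; ring_nf; simp
  have hsub : s ≤ a + 2 := by nlinarith [sq_nonneg (s - (a + 2))]
  set t := 2 / a with htdef
  have ht : t * a = 2 := div_mul_cancel₀ (2:ℝ) (ne_of_gt ha0)
  have ht2 : t ≤ 2 := by
    rw [htdef, div_le_iff₀ ha0]; nlinarith
  have ht0 : 0 ≤ t := by positivity
  have hslb : a + 2 - t ≤ s := by
    have h1 : 0 ≤ a + 2 - t := by nlinarith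
    have hsq : (a + 2 - t) ^ 2 ≤ s ^ 2 := by nlinarith
    nlinarith [sq_nonneg (s + (a + 2 - t))]
  constructor
  · simp only [gH, ← hadef, ← hsdef]
    nlinarith
  · simp only [gH, ← hadef, ← hsdef]
    have h2a : t ≤ 2 * Real.exp (-x) := by
      rw [htdef, div_le_iff₀ ha0]
      nlinarith [Real.exp_pos (-x), Real.add_one_le_exp (-x), Real.add_one_le_exp x,
        mul_pos (Real.exp_pos (-x)) (Real.exp_pos (-x))]
    nlinarith

lemma gH_bounds2 (x : ℝ) (hx : 0 ≤ x) :
    0 ≤ gH (-x) ∧ gH (-x) ≤ 2 * Real.exp (-x) := by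
  have hb0 : 0 < Real.exp (-2 * x) := Real.exp_pos _
  have hc0 : 0 < Real.exp (-x) := Real.exp_pos _
  have hb1 : Real.exp (-2 * x) ≤ Real.exp (-x) := Real.exp_le_exp.mpr (by linarith)
  have hbc : Real.exp (-2 * x) = Real.exp (-x) ^ 2 := by
    rw [← Real.exp_nat_mul]; ring_nf
  have h4 : Real.exp (4 * -x) = Real.exp (-2 * x) ^ 2 := by
    rw [← Real.exp_nat_mul]; ring_nf
  have h2 : Real.exp (2 * -x) = Real.exp (-2 * x) := by ring_nf
  have hnn : 0 ≤ Real.exp (4 * -x) + 4 * Real.exp (2 * -x) := by positivity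
  set s := Real.sqrt (Real.exp (4 * -x) + 4 * Real.exp (2 * -x)) with hsdef
  have hs0 : 0 ≤ s := Real.sqrt_nonneg _
  have hs2 : s ^ 2 = Real.exp (-2 * x) ^ 2 + 4 * Real.exp (-2 * x) := by
    rw [hsdef, Real.sq_sqrt hnn, h4, h2]
  have hub : s ≤ Real.exp (-2 * x) + 2 * Real.exp (-x) := by
    nlinarith [sq_nonneg (s - (Real.exp (-2 * x) + 2 * Real.exp (-x)))]
  have hlb : Real.exp (-2 * x) ≤ s := by
    nlinarith [sq_nonneg (s - Real.exp (-2 * x))]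
  constructor
  · simp only [gH]; rw [← hsdef, h2]; linarith
  · simp only [gH]; rw [← hsdef, h2]; nlinarith

/-- `ξ·(1 − g(ξ)) → 0` and `ξ·g(−ξ) → 0` as `ξ → +∞`. -/
theorem stmt19 :
    Filter.Tendsto (fun ξ : ℝ => ξ * (1 - gH ξ)) Filter.atTop (nhds 0) ∧
    Filter.Tendsto (fun ξ : ℝ => ξ * gH (-ξ)) Filter.atTop (nhds 0) := by
  have hbase : Filter.Tendsto (fun x : ℝ => 2 * (x ^ 1 * Real.exp (-x)))
      Filter.atTop (nhds 0) := by
    have := (Real.tendsto_pow_mul_exp_neg_atTop_nhds_zero 1).const_mul (2:ℝ)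
    simpa using this
  have h0 : Filter.Tendsto (fun _ : ℝ => (0:ℝ)) Filter.atTop (nhds 0) :=
    tendsto_const_nhds
  constructor
  · refine tendsto_of_tendsto_of_tendsto_of_le_of_le' h0 hbase ?_ ?_
    · filter_upwards [Filter.eventually_ge_atTop (0:ℝ)] with x hx
      exact mul_nonneg hx (gH_bounds1 x hx).1
    · filter_upwards [Filter.eventually_ge_atTop (0:ℝ)] with x hx
      have := (gH_bounds1 x hx).2
      have hxe : 0 ≤ Real.exp (-x) := (Real.exp_pos _).le
      nlinarith
  · refine tendsto_of_tendsto_of_tendsto_of_le_of_le' h0 hbase ?_ ?_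
    · filter_upwards [Filter.eventually_ge_atTop (0:ℝ)] with x hx
      exact mul_nonneg hx (gH_bounds2 x hx).1
    · filter_upwards [Filter.eventually_ge_atTop (0:ℝ)] with x hx
      have := (gH_bounds2 x hx).2
      have hxe : 0 ≤ Real.exp (-x) := (Real.exp_pos _).le
      nlinarith
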